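/- arXiv:0908.1551 — 4 statements merged into one kernel-verified Lean document; each statement's English description precedes it below -/
import Mathlib

section
/- Let d₀, d₁, d₂ be real numbers with d₁ > 0, 2d₁ ≤ d₀ and 0 < d₂ ≤ d₁²/(8 d₀). Then 0 ≤ d₀ − 2d₂ − √((d₀ + 2d₂)² − d₁²) ≤ d₁/2. -/
/-!
With `s = d₀ - 2d₂` and `t = d₀ + 2d₂` one has `t² - s² = 8 d₀ d₂`, which the hypotheses place in
`[0, d₁²]`; they also force `16 d₂ ≤ d₁`, hence `s ≥ 15 d₁ / 8`. So `√(t² - d₁²) ≤ s`, and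
`(s - d₁/2)² = s² - s d₁ + d₁²/4 ≤ s² - d₁² ≤ t² - d₁²` as soon as `s ≥ 5 d₁ / 4`.
-/

namespace Real

theorem sqrt_sq_sub_sq_le {r s t : ℝ} (hs : 0 ≤ s) (h : t ^ 2 - s ^ 2 ≤ r ^ 2) :
    √(t ^ 2 - r ^ 2) ≤ s :=
  sqrt_le_iff.mpr ⟨hs, by linarith⟩

theorem sub_half_le_sqrt_sq_sub_sq {r s t : ℝ} (hr : 0 ≤ r) (hs : 5 * r / 4 ≤ s)
    (h : s ^ 2 ≤ t ^ 2) : s - r / 2 ≤ √(t ^ 2 - r ^ 2) :=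
  le_sqrt_of_sq_le <| by nlinarith

end Real

theorem sqrt_param_ineq
    (d₀ d₁ d₂ : ℝ) (hd₁ : 0 < d₁) (hd₁d₀ : 2 * d₁ ≤ d₀)
    (hd₂ : 0 < d₂) (hd₂' : d₂ ≤ d₁ ^ 2 / (8 * d₀)) :
    0 ≤ d₀ - 2 * d₂ - Real.sqrt ((d₀ + 2 * d₂) ^ 2 - d₁ ^ 2) ∧
      d₀ - 2 * d₂ - Real.sqrt ((d₀ + 2 * d₂) ^ 2 - d₁ ^ 2) ≤ d₁ / 2 := by
  have hd₀ : 0 < d₀ := by linarith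
  have hprod : 8 * d₀ * d₂ ≤ d₁ ^ 2 := (le_div_iff₀' (by positivity)).mp hd₂'
  have hsmall : 16 * d₂ ≤ d₁ := by nlinarith
  have hdiff : (d₀ + 2 * d₂) ^ 2 - (d₀ - 2 * d₂) ^ 2 = 8 * d₀ * d₂ := by ring
  constructor
  · have := Real.sqrt_sq_sub_sq_le (r := d₁) (s := d₀ - 2 * d₂) (t := d₀ + 2 * d₂)
      (by linarith) (by linarith)
    linarith
  · have := Real.sub_half_le_sqrt_sq_sub_sq (r := d₁) (s := d₀ - 2 * d₂) (t := d₀ + 2 * d₂)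
      hd₁.le (by linarith) (by nlinarith)
    linarith
end

section
/- Let E be a real inner product space, r ≥ 0, and let K be a nonempty subset of E contained in both closed balls B(m₁, r) and B(m₂, r). Then ‖m₁ − m₂‖ ≤ 2r and K is contained in the closed ball with center (m₁ + m₂)/2 and radius √(r² − ‖m₁ − m₂‖²/4). -/
open Metric

section MidpointBall

variable {V P : Type*} [NormedAddCommGroup V] [InnerProductSpace ℝ V] [MetricSpace P]
  [NormedAddTorsor V P]

/-- By Apollonius' theorem, `dist x (midpoint a b)² = (dist x a² + dist x b²) / 2 - dist a b² / 4`. -/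
theorem closedBall_inter_closedBall_subset_closedBall_midpoint (a b : P) (r : ℝ) :
    closedBall a r ∩ closedBall b r ⊆
      closedBall (midpoint ℝ a b) (√(r ^ 2 - dist a b ^ 2 / 4)) := by
  rintro x ⟨hxa, hxb⟩
  rw [mem_closedBall] at hxa hxb ⊢
  have hxa_sq : dist x a ^ 2 ≤ r ^ 2 := pow_le_pow_left₀ dist_nonneg hxa 2
  have hxb_sq : dist x b ^ 2 ≤ r ^ 2 := pow_le_pow_left₀ dist_nonneg hxb 2
  have apollonius :=
    EuclideanGeometry.dist_sq_add_dist_sq_eq_two_mul_dist_midpoint_sq_add_half_dist_sq x a b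
  exact Real.le_sqrt_of_sq_le (by linarith)

end MidpointBall

theorem midpoint_enclosing_ball_general
    {E : Type*} [NormedAddCommGroup E] [InnerProductSpace ℝ E]
    (r : ℝ) (K : Set E) (hK : K.Nonempty)
    (m₁ m₂ : E)
    (h₁ : K ⊆ Metric.closedBall m₁ r) (h₂ : K ⊆ Metric.closedBall m₂ r) :
    ‖m₁ - m₂‖ ≤ 2 * r ∧
      K ⊆ Metric.closedBall ((1 / 2 : ℝ) • (m₁ + m₂))
        (Real.sqrt (r ^ 2 - ‖m₁ - m₂‖ ^ 2 / 4)) := by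
  have hK_inter : K ⊆ closedBall m₁ r ∩ closedBall m₂ r := Set.subset_inter h₁ h₂
  have hcenter : (1 / 2 : ℝ) • (m₁ + m₂) = midpoint ℝ m₁ m₂ := by
    rw [midpoint_eq_smul_add]; norm_num
  rw [← dist_eq_norm, hcenter]
  exact ⟨(dist_le_add_of_nonempty_closedBall_inter_closedBall (hK.mono hK_inter)).trans_eq
      (two_mul r).symm,
    hK_inter.trans (closedBall_inter_closedBall_subset_closedBall_midpoint m₁ m₂ r)⟩

theorem midpoint_enclosing_ball
    {E : Type*} [NormedAddCommGroup E] [InnerProductSpace ℝ E]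
    (r : ℝ) (hr : 0 ≤ r) (K : Set E) (hK : K.Nonempty)
    (m₁ m₂ : E)
    (h₁ : K ⊆ Metric.closedBall m₁ r) (h₂ : K ⊆ Metric.closedBall m₂ r) :
    ‖m₁ - m₂‖ ≤ 2 * r ∧
      K ⊆ Metric.closedBall ((1 / 2 : ℝ) • (m₁ + m₂))
        (Real.sqrt (r ^ 2 - ‖m₁ - m₂‖ ^ 2 / 4)) :=
  midpoint_enclosing_ball_general r K hK m₁ m₂ h₁ h₂
end

section
/- Let K be a nonempty compact subset of Euclidean space ℝ^d and suppose the closed ball B(m,r) is a minimal enclosing ball of K, i.e. K ⊆ B(m,r) and every closed ball containing K has radius ≥ r. Then the intersection of K with the sphere ∂B(m,r) = {x : ‖x − m‖ = r} is nonempty, and every closed ball containing K ∩ ∂B(m,r) has radius ≥ r; that is, B(m,r) is also a minimal enclosing ball of K ∩ ∂B(m,r). -/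
/-!
If the points of `K` on the sphere `∂B(m, r)` all lay within `r' < r` of some `m'`, moving the
centre slightly from `m` towards `m'` would give a smaller enclosing ball. Quantitatively: by
minimality, each centre `p_t = (1 - t) m + t m'` has a point `x_t ∈ K` with `r ≤ dist x_t p_t`,
and convexity of `p ↦ dist x_t p` forces `r ≤ dist x_t m'`. A limit point of `x_t` as `t → 0`
then lies on the sphere `∂B(m, r)` and at distance at least `r` from `m'`.
-/

open Metric Filter Topology AffineMap

theorem IsCompact.exists_le_dist_of_forall_subset_closedBall {X : Type*} [PseudoMetricSpace X]
    {K : Set X} (hK : IsCompact K) {r : ℝ}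
    (hmin : ∀ p r', K ⊆ closedBall p r' → r ≤ r') (p : X) : ∃ x ∈ K, r ≤ dist x p := by
  rcases K.eq_empty_or_nonempty with rfl | hne
  · linarith [hmin p (r - 1) (Set.empty_subset _)]
  obtain ⟨x, hxK, hx⟩ := hK.exists_isMaxOn hne (continuous_id.dist continuous_const).continuousOn
  exact ⟨x, hxK, hmin p _ fun y hy => mem_closedBall.2 (hx hy)⟩

theorem le_dist_of_le_dist_lineMap {E : Type*} [SeminormedAddCommGroup E] [NormedSpace ℝ E]
    {x m m' : E} {r t : ℝ} (hxm : dist x m ≤ r) (ht₀ : 0 < t) (ht₁ : t ≤ 1)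
    (h : r ≤ dist x (lineMap m m' t)) : r ≤ dist x m' := by
  have hconv : dist x ((1 - t) • m + t • m') ≤ (1 - t) * dist x m + t * dist x m' := by
    simpa only [dist_comm x, smul_eq_mul] using (convexOn_univ_dist x).2 (Set.mem_univ m) (Set.mem_univ m')
      (sub_nonneg.2 ht₁) ht₀.le (sub_add_cancel 1 t)
  rw [lineMap_apply_module] at h
  nlinarith [mul_le_mul_of_nonneg_left hxm (sub_nonneg.2 ht₁)]

theorem IsCompact.exists_mem_sphere_le_dist {E : Type*} [SeminormedAddCommGroup E]
    [NormedSpace ℝ E] {K : Set E} (hK : IsCompact K) {m : E} {r : ℝ}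
    (hsub : K ⊆ closedBall m r) (hmin : ∀ p r', K ⊆ closedBall p r' → r ≤ r') (m' : E) :
    ∃ x ∈ K ∩ sphere m r, r ≤ dist x m' := by
  set t : ℕ → ℝ := fun n => 1 / (n + 1)
  have ht : Tendsto t atTop (𝓝 0) := tendsto_one_div_add_atTop_nhds_zero_nat
  have ht₀ (n : ℕ) : 0 < t n := Nat.one_div_pos_of_nat
  have ht₁ (n : ℕ) : t n ≤ 1 := div_le_one_of_le₀ (by simp) (by positivity)
  choose x hxK hx using fun n => hK.exists_le_dist_of_forall_subset_closedBall hmin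
    (lineMap m m' (t n))
  obtain ⟨a, haK, φ, hφ, hxa⟩ := hK.tendsto_subseq hxK
  have hp : Tendsto (lineMap m m' ∘ t ∘ φ) atTop (𝓝 m) := by
    simpa only [lineMap_apply_zero] using (lineMap_continuous.tendsto 0).comp (ht.comp hφ.tendsto_atTop)
  have ham : r ≤ dist a m := ge_of_tendsto' (hxa.dist hp) fun n => hx (φ n)
  have ham' : r ≤ dist a m' := ge_of_tendsto' (hxa.dist tendsto_const_nhds) fun n =>
    le_dist_of_le_dist_lineMap (hsub (hxK _)) (ht₀ _) (ht₁ _) (hx _)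
  exact ⟨a, ⟨haK, le_antisymm (hsub haK) ham⟩, ham'⟩

theorem meb_of_sphere_intersection_general
    (d : ℕ) (K : Set (EuclideanSpace ℝ (Fin d)))
    (hKc : IsCompact K)
    (m : EuclideanSpace ℝ (Fin d)) (r : ℝ)
    (hsub : K ⊆ Metric.closedBall m r)
    (hmin : ∀ (m' : EuclideanSpace ℝ (Fin d)) (r' : ℝ),
      K ⊆ Metric.closedBall m' r' → r ≤ r') :
    (K ∩ Metric.sphere m r).Nonempty ∧
      ∀ (m' : EuclideanSpace ℝ (Fin d)) (r' : ℝ),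
        K ∩ Metric.sphere m r ⊆ Metric.closedBall m' r' → r ≤ r' := by
  obtain ⟨x, hxS, -⟩ := hKc.exists_mem_sphere_le_dist hsub hmin m
  refine ⟨⟨x, hxS⟩, fun m' r' hS => ?_⟩
  obtain ⟨y, hyS, hy⟩ := hKc.exists_mem_sphere_le_dist hsub hmin m'
  exact hy.trans (hS hyS)

theorem meb_of_sphere_intersection
    (d : ℕ) (K : Set (EuclideanSpace ℝ (Fin d)))
    (hK : K.Nonempty) (hKc : IsCompact K)
    (m : EuclideanSpace ℝ (Fin d)) (r : ℝ)
    (hsub : K ⊆ Metric.closedBall m r)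
    (hmin : ∀ (m' : EuclideanSpace ℝ (Fin d)) (r' : ℝ),
      K ⊆ Metric.closedBall m' r' → r ≤ r') :
    (K ∩ Metric.sphere m r).Nonempty ∧
      ∀ (m' : EuclideanSpace ℝ (Fin d)) (r' : ℝ),
        K ∩ Metric.sphere m r ⊆ Metric.closedBall m' r' → r ≤ r' :=
  meb_of_sphere_intersection_general d K hKc m r hsub hmin
end

section
/- Let C be a nonempty compact, path-connected subset of ℝ^d, let c₀ ∈ C, and let δ, d₀ be real numbers with 0 < 2δ < d₀. Then there exist finitely many points c₁, …, c_n ∈ C such that ‖c_{i−1} − c_i‖ ≤ d₀ − 2δ for every 1 ≤ i ≤ n, and the closed (d₀ − 2δ)-neighborhood C_{+(d₀−2δ)} = {x ∈ ℝ^d : dist(x, C) ≤ d₀ − 2δ} is contained in the union of the open balls of radius d₀ − δ centered at c₀, c₁, …, c_n. -/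
/-!
Cover the compact set `C` by finitely many `δ`-balls centred in `C`. Since `C` is connected, any
two of its points are joined by a chain in `C` with steps at most `ε = d₀ - 2δ`; concatenating such
chains gives a single chain from `c₀` through all the centres. A point within `ε` of `C` is then
within `ε + δ = d₀ - δ` of a point of the chain.
-/

open Metric Set

section ChainStep

variable {α : Type*} [PseudoMetricSpace α] {C : Set α} {ε r : ℝ} {a : α}

def ChainStep (C : Set α) (ε : ℝ) (x y : α) : Prop :=
  x ∈ C ∧ y ∈ C ∧ dist x y ≤ ε

instance : Std.Symm (ChainStep C ε) where
  symm _ _ h := ⟨h.2.1, h.1, (dist_comm _ _).trans_le h.2.2⟩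

/-- Points reachable by `ε`-chains form a relatively clopen subset, hence everything. -/
theorem IsPreconnected.reflTransGen_chainStep (hC : IsPreconnected C) (hε : 0 < ε) {x y : α}
    (hx : x ∈ C) (hy : y ∈ C) : Relation.ReflTransGen (ChainStep C ε) x y := by
  refine hC.induction₂ (Relation.ReflTransGen (ChainStep C ε)) (fun x hx => ?_)
    (fun _ _ _ _ _ _ hxy hyz => hxy.trans hyz) (fun _ _ _ _ h => symm h) hx hy
  filter_upwards [self_mem_nhdsWithin, mem_nhdsWithin_of_mem_nhds (ball_mem_nhds x hε)]
    with y hyC hyx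
  exact .single ⟨hx, hyC, (mem_ball'.1 hyx).le⟩

theorem IsPreconnected.exists_isChain_chainStep_superset (hC : IsPreconnected C) (hε : 0 < ε)
    (t : List α) (ht : ∀ y ∈ t, y ∈ C) (ha : a ∈ C) :
    ∃ l, (a :: l).IsChain (ChainStep C ε) ∧ t ⊆ a :: l := by
  induction t generalizing a with
  | nil => exact ⟨[], .singleton a, List.nil_subset _⟩
  | cons y t ih =>
    have hy : y ∈ C := ht y List.mem_cons_self
    obtain ⟨l₁, hl₁, hlast⟩ :=
      List.exists_isChain_cons_of_relationReflTransGen (hC.reflTransGen_chainStep hε ha hy)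
    obtain ⟨l₂, hl₂, hsub⟩ := ih (fun z hz => ht z (List.mem_cons_of_mem _ hz)) hy
    have hy_mem : y ∈ a :: l₁ := hlast ▸ List.getLast_mem _
    refine ⟨l₁ ++ l₂, ?_, ?_⟩ <;> rw [← List.cons_append]
    · refine hl₁.append hl₂.tail fun x hx z hz => ?_
      rw [List.getLast?_eq_some_getLast (List.cons_ne_nil _ _), hlast, Option.mem_some_iff] at hx
      exact hx ▸ List.isChain_cons.1 hl₂ |>.1 z hz
    · refine List.cons_subset.2 ⟨List.mem_append_left _ hy_mem, List.Subset.trans hsub ?_⟩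
      exact List.cons_subset.2 ⟨List.mem_append_left _ hy_mem, List.subset_append_right _ _⟩

theorem IsCompact.exists_isChain_chainStep_cover (hCc : IsCompact C) (hC : IsPreconnected C)
    (hε : 0 < ε) (hr : 0 < r) (ha : a ∈ C) :
    ∃ l, (a :: l).IsChain (ChainStep C ε) ∧ C ⊆ ⋃ x ∈ a :: l, ball x r := by
  obtain ⟨t, htC, hcover⟩ := hCc.elim_nhds_subcover (ball · r) fun x _ => ball_mem_nhds x hr
  obtain ⟨l, hl, hsub⟩ :=
    hC.exists_isChain_chainStep_superset hε t.toList (by simpa only [Finset.mem_toList]) ha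
  exact ⟨l, hl, hcover.trans <| iUnion₂_mono' fun x hx =>
    ⟨x, hsub (Finset.mem_toList.2 hx), subset_rfl⟩⟩

end ChainStep

theorem IsCompact.setOf_infDist_le_subset_biUnion_ball {α : Type*} [PseudoMetricSpace α]
    {C s : Set α} {ε r : ℝ} (hCc : IsCompact C) (hne : C.Nonempty)
    (hs : C ⊆ ⋃ x ∈ s, ball x r) : {y | infDist y C ≤ ε} ⊆ ⋃ x ∈ s, ball x (ε + r) := by
  intro y hy
  obtain ⟨z, hzC, hyz⟩ := hCc.exists_infDist_eq_dist hne y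
  obtain ⟨x, hxs, hzx⟩ := mem_iUnion₂.1 (hs hzC)
  refine mem_iUnion₂.2 ⟨x, hxs, ?_⟩
  calc dist y x ≤ dist y z + dist z x := dist_triangle y z x
    _ < ε + r := add_lt_add_of_le_of_lt (hyz ▸ hy) hzx

theorem List.IsChain.rel_getD_sub_one {α : Type*} {R : α → α → Prop} {L : List α}
    (h : L.IsChain R) (d : α) {i : ℕ} (hi₀ : 1 ≤ i) (hi : i < L.length) :
    R (L.getD (i - 1) d) (L.getD i d) := by
  obtain ⟨j, rfl⟩ : ∃ j, i = j + 1 := ⟨i - 1, by omega⟩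
  rw [Nat.add_sub_cancel, List.getD_eq_getElem _ _ (by omega), List.getD_eq_getElem _ _ hi]
  exact List.isChain_iff_getElem.1 h j hi

theorem chain_cover_of_compact_pathConnected
    (d : ℕ) (C : Set (EuclideanSpace ℝ (Fin d)))
    (hCc : IsCompact C) (hCp : IsPathConnected C)
    (c₀ : EuclideanSpace ℝ (Fin d)) (hc₀ : c₀ ∈ C)
    (δ d₀ : ℝ) (hδ : 0 < δ) (hδd₀ : 2 * δ < d₀) :
    ∃ (n : ℕ) (c : ℕ → EuclideanSpace ℝ (Fin d)),
      c 0 = c₀ ∧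
      (∀ i, i ≤ n → c i ∈ C) ∧
      (∀ i, 1 ≤ i → i ≤ n → ‖c (i - 1) - c i‖ ≤ d₀ - 2 * δ) ∧
      {x : EuclideanSpace ℝ (Fin d) | Metric.infDist x C ≤ d₀ - 2 * δ} ⊆
        ⋃ i ∈ Finset.range (n + 1), Metric.ball (c i) (d₀ - δ) := by
  obtain ⟨l, hchain, hcover⟩ := hCc.exists_isChain_chainStep_cover hCp.isConnected.isPreconnected
    (ε := d₀ - 2 * δ) (by linarith) hδ hc₀
  have hstep : ∀ i, 1 ≤ i → i ≤ l.length →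
      ChainStep C (d₀ - 2 * δ) ((c₀ :: l).getD (i - 1) c₀) ((c₀ :: l).getD i c₀) :=
    fun i hi₀ hi => hchain.rel_getD_sub_one c₀ hi₀ (Nat.lt_succ_of_le hi)
  refine ⟨l.length, fun i => (c₀ :: l).getD i c₀, rfl, fun i hi => ?_,
    fun i hi₀ hi => (dist_eq_norm _ _).ge.trans (hstep i hi₀ hi).2.2, ?_⟩
  · rcases Nat.eq_zero_or_pos i with rfl | hi₀
    · exact hc₀
    · exact (hstep i hi₀ hi).2.1
  have hR : d₀ - 2 * δ + δ = d₀ - δ := by ring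
  refine (hR ▸ hCc.setOf_infDist_le_subset_biUnion_ball ⟨c₀, hc₀⟩ hcover).trans ?_
  refine iUnion₂_mono' fun x hx => ?_
  obtain ⟨i, hi, rfl⟩ := List.mem_iff_getElem.1 hx
  exact ⟨i, Finset.mem_range.2 hi, by dsimp only; rw [List.getD_eq_getElem _ _ hi]⟩
end
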